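/- arXiv:1610.03820 — 3 statements merged into one kernel-verified Lean document; each statement's English description precedes it below -/
import Mathlib

section
/- Let X be a generic set of r = 2k points in P^1 x P^1 (k ≥ 1). Then: (i) (I_X)_{(i,1)} = 0 for all i < k; (ii) dim_k (I_X)_{(k,1)} = 2; (iii) for every a ≥ k, (I_X)_{(a+1,1)} = R_{(1,0)} · (I_X)_{(a,1)}, i.e. the k-span of s·f and t·f for f in (I_X)_{(a,1)}. Consequently the graded k[s,t]-module M = ⊕_{i≥0} (I_X)_{(i,1)} is minimally generated by exactly two elements, both of bidegree (k,1). -/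
open MvPolynomial

noncomputable section

variable (k : Type) [Field k] [IsAlgClosed k] [CharZero k]

/-- The bigrading weight on the variables `s, t, u, v` of the total coordinate ring
`R = k[s,t,u,v]` of `ℙ¹ × ℙ¹`: `deg s = deg t = (1,0)`, `deg u = deg v = (0,1)`. -/
def bw : Fin 4 → ℕ × ℕ := ![(1,0),(1,0),(0,1),(0,1)]

/-- The graded piece `R_{(i,j)}` of bihomogeneous forms of bidegree `(i,j)`. -/
def bideg (i j : ℕ) : Submodule k (MvPolynomial (Fin 4) k) :=
  weightedHomogeneousSubmodule k (bw) ((i, j) : ℕ × ℕ)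

/-- The subalgebra `k[s,t] ⊆ R`. -/
def Kst : Subalgebra k (MvPolynomial (Fin 4) k) := Algebra.adjoin k {X 0, X 1}

/-- A point of `ℙ¹ × ℙ¹`. -/
abbrev Pt := Projectivization k (Fin 2 → k) × Projectivization k (Fin 2 → k)

/-- A nonzero linear form in `s,t` vanishing at `A ∈ ℙ¹` (for the first factor). -/
def hForm (A : Projectivization k (Fin 2 → k)) : MvPolynomial (Fin 4) k :=
  C (A.rep 1) * X 0 - C (A.rep 0) * X 1

/-- A nonzero linear form in `u,v` vanishing at `B ∈ ℙ¹` (for the second factor). -/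
def lForm (B : Projectivization k (Fin 2 → k)) : MvPolynomial (Fin 4) k :=
  C (B.rep 1) * X 2 - C (B.rep 0) * X 3

/-- The bihomogeneous ideal `I_P = (h, l)` of a point `P = A × B` of `ℙ¹ × ℙ¹`. -/
def ptIdeal (P : Pt k) : Ideal (MvPolynomial (Fin 4) k) :=
  Ideal.span {hForm k P.1, lForm k P.2}

/-- The ideal `I_X = ⋂_{P ∈ X} I_P` of a finite set of points `X ⊆ ℙ¹ × ℙ¹`. -/
def idealX (Xpts : Finset (Pt k)) : Ideal (MvPolynomial (Fin 4) k) :=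
  ⨅ P ∈ Xpts, ptIdeal k P

/-- The graded piece `(I_X)_{(i,j)}` as a `k`-vector space. -/
def pieceI (Xpts : Finset (Pt k)) (i j : ℕ) : Submodule k (MvPolynomial (Fin 4) k) :=
  (Submodule.restrictScalars k (idealX k Xpts)) ⊓ bideg k i j

/-- `X` is a generic set of `r` points of `ℙ¹ × ℙ¹`: it consists of `r` distinct points and
its bigraded Hilbert function `H_X(i,j) = dim_k R_{(i,j)} - dim_k (I_X)_{(i,j)}`
(where `dim_k R_{(i,j)} = (i+1)(j+1)`) equals `min ((i+1)(j+1)) r` for all `(i,j)`. -/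
def GenericPts (Xpts : Finset (Pt k)) (r : ℕ) : Prop :=
  Xpts.card = r ∧ ∀ i j : ℕ,
    (i+1)*(j+1) - Module.finrank k ↥(pieceI k Xpts i j) = min ((i+1)*(j+1)) r

/-- `R_{(1,0)} · N`: the `k`-span of `s·f` and `t·f` for `f ∈ N`. -/
def bump (N : Submodule k (MvPolynomial (Fin 4) k)) : Submodule k (MvPolynomial (Fin 4) k) :=
  Submodule.span k ((fun p => X 0 * p) '' (N : Set (MvPolynomial (Fin 4) k)) ∪
    (fun p => X 1 * p) '' (N : Set (MvPolynomial (Fin 4) k)))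

end

/-!
For a generic set `X` of `2κ` points the Hilbert function gives
`dim (I_X)_{(i,1)} = 2(i+1) - 2κ` (truncated at `0`). Every point ideal is prime and contains at
most one of `s, t`, so `s h, t h ∈ I_X` forces `h ∈ I_X`; hence the only relations
`s f + t g = 0` among elements of `(I_X)_{(a,1)}` are the Koszul ones `(f, g) = (t h, -s h)` with
`h ∈ (I_X)_{(a-1,1)}`. Therefore
`dim R_{(1,0)} · (I_X)_{(a,1)} = 2 dim (I_X)_{(a,1)} - dim (I_X)_{(a-1,1)}`, which for `a ≥ κ` is
`dim (I_X)_{(a+1,1)}`. So from degree `κ` on, multiplication by `s, t` fills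
every graded piece, and a basis of the two-dimensional piece `(I_X)_{(κ,1)}` generates `M`.
-/

namespace MvPolynomial

variable {σ R M N : Type*}

theorem IsWeightedHomogeneous.map_weight [CommSemiring R] [AddCommMonoid M] [AddCommMonoid N]
    {w : σ → M} {p : MvPolynomial σ R} {m : M} (hp : IsWeightedHomogeneous w p m) (φ : M →+ N) :
    IsWeightedHomogeneous (φ ∘ w) p (φ m) := by
  intro d hd
  rw [← hp hd, Finsupp.weight_apply, Finsupp.weight_apply, map_finsuppSum]
  simp [map_nsmul]

theorem IsWeightedHomogeneous.of_X_mul [CommSemiring R] [AddCancelCommMonoid M] {w : σ → M}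
    {p : MvPolynomial σ R} {m : M} {i : σ} (hp : IsWeightedHomogeneous w (X i * p) (w i + m)) :
    IsWeightedHomogeneous w p m := by
  intro d hd
  rw [← coeff_X_mul d i p] at hd
  have := hp hd
  rw [map_add, Finsupp.weight_single, one_smul] at this
  exact add_left_cancel this

theorem sub_mem_of_forall_X_sub_mem [CommRing R]
    {θ : MvPolynomial σ R →ₐ[R] MvPolynomial σ R} {I : Ideal (MvPolynomial σ R)}
    (hθ : ∀ i, X i - θ (X i) ∈ I) (p : MvPolynomial σ R) : p - θ p ∈ I := by
  rw [← Ideal.Quotient.eq]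
  show Ideal.Quotient.mkₐ R I p = (Ideal.Quotient.mkₐ R I).comp θ p
  congr 1
  exact algHom_ext fun i => Ideal.Quotient.eq.mpr (hθ i)

end MvPolynomial

theorem Prime.exists_eq_mul_of_mul_add_mul_eq_zero {R : Type*} [CommRing R] [IsDomain R]
    {a b f g : R} (hb : Prime b) (hba : ¬ b ∣ a) (h : a * f + b * g = 0) :
    ∃ c, f = b * c ∧ g = -(a * c) := by
  obtain ⟨c, rfl⟩ : b ∣ f :=
    (hb.dvd_or_dvd ⟨-g, by linear_combination h⟩).resolve_left hba
  refine ⟨c, rfl, ?_⟩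
  have : b * (a * c + g) = 0 := by linear_combination h
  linear_combination (mul_eq_zero.mp this).resolve_left hb.ne_zero

theorem Submodule.exists_linearIndependent_pair_of_finrank_eq_two {K V : Type*} [Field K]
    [AddCommGroup V] [Module K V] {W : Submodule K V} (hW : Module.finrank K W = 2) :
    ∃ g₁ g₂ : V, g₁ ∈ W ∧ g₂ ∈ W ∧ LinearIndependent K ![g₁, g₂] ∧
      W ≤ Submodule.span K {g₁, g₂} := by
  have : FiniteDimensional K W := Module.finite_of_finrank_eq_succ hW
  let b := Module.finBasisOfFinrankEq K W hW
  refine ⟨b 0, b 1, (b 0).2, (b 1).2, ?_, fun f hf => ?_⟩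
  · have hb : ![(b 0 : V), b 1] = W.subtype ∘ b := by
      ext i
      fin_cases i <;> rfl
    rw [hb]
    exact b.linearIndependent.map' W.subtype W.ker_subtype
  · have := congrArg Subtype.val (b.sum_repr ⟨f, hf⟩)
    rw [Fin.sum_univ_two] at this
    exact Submodule.mem_span_pair.mpr ⟨_, _, this⟩

section PointIdeal

variable {K : Type*} [Field K]

theorem exists_mul_add_mul_eq_one {a : Fin 2 → K} (ha : a ≠ 0) :
    ∃ c : Fin 2 → K, a 0 * c 0 + a 1 * c 1 = 1 := by
  by_cases h0 : a 0 = 0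
  · have h1 : a 1 ≠ 0 := fun h1 => ha (funext fun i => by fin_cases i <;> assumption)
    exact ⟨![0, (a 1)⁻¹], by simp [h1]⟩
  · exact ⟨![(a 0)⁻¹, 0], by simp [h0]⟩

/-- The cone over the point `[a] × [b]` of `ℙ¹ × ℙ¹`, parametrized by `(x, y) ↦ (x a, y b)`. -/
noncomputable def pointHom (a b : Fin 2 → K) :
    MvPolynomial (Fin 4) K →ₐ[K] MvPolynomial (Fin 2) K :=
  aeval ![C (a 0) * X 0, C (a 1) * X 0, C (b 0) * X 1, C (b 1) * X 1]

theorem ker_pointHom {a b : Fin 2 → K} (ha : a ≠ 0) (hb : b ≠ 0) :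
    RingHom.ker (pointHom a b) =
      Ideal.span {C (a 1) * X 0 - C (a 0) * X 1, C (b 1) * X 2 - C (b 0) * X 3} := by
  refine le_antisymm ?_ ?_
  · obtain ⟨c, hc⟩ := exists_mul_add_mul_eq_one ha
    obtain ⟨e, he⟩ := exists_mul_add_mul_eq_one hb
    replace hc : C (a 0) * C (c 0) + C (a 1) * C (c 1) = (1 : MvPolynomial (Fin 4) K) := by
      rw [← C_mul, ← C_mul, ← C_add, hc, C_1]
    replace he : C (b 0) * C (e 0) + C (b 1) * C (e 1) = (1 : MvPolynomial (Fin 4) K) := by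
      rw [← C_mul, ← C_mul, ← C_add, he, C_1]
    -- a section of `pointHom a b` modulo the ideal
    set θ := (aeval (R := K)
      (![C (c 0) * X 0 + C (c 1) * X 1, C (e 0) * X 2 + C (e 1) * X 3] :
        Fin 2 → MvPolynomial (Fin 4) K)).comp (pointHom a b)
    have hθ : ∀ i, X i - θ (X i) ∈
        Ideal.span {C (a 1) * X 0 - C (a 0) * X 1, C (b 1) * X 2 - C (b 0) * X 3} := by
      intro i
      rw [Ideal.mem_span_pair]
      fin_cases i
      · exact ⟨C (c 1), 0, by simp [θ, pointHom]; linear_combination X 0 * hc⟩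
      · exact ⟨-C (c 0), 0, by simp [θ, pointHom]; linear_combination X 1 * hc⟩
      · exact ⟨0, C (e 1), by simp [θ, pointHom]; linear_combination X 2 * he⟩
      · exact ⟨0, -C (e 0), by simp [θ, pointHom]; linear_combination X 3 * he⟩
    intro f hf
    simpa [θ, RingHom.mem_ker.mp hf] using sub_mem_of_forall_X_sub_mem hθ f
  · rw [Ideal.span_le]
    rintro g (rfl | rfl) <;> simp [pointHom] <;> ring

end PointIdeal

section PointsOfP1xP1

variable {k : Type} [Field k]

theorem ptIdeal_eq_ker (P : Pt k) : ptIdeal k P = RingHom.ker (pointHom P.1.rep P.2.rep) :=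
  (ker_pointHom P.1.rep_nonzero P.2.rep_nonzero).symm

theorem ptIdeal_isPrime (P : Pt k) : (ptIdeal k P).IsPrime := by
  rw [ptIdeal_eq_ker]
  exact RingHom.ker_isPrime _

theorem not_X_zero_mem_and_X_one_mem_ptIdeal (P : Pt k) :
    ¬ (X 0 ∈ ptIdeal k P ∧ X 1 ∈ ptIdeal k P) := by
  rintro ⟨h0, h1⟩
  rw [ptIdeal_eq_ker, RingHom.mem_ker] at h0 h1
  simp only [pointHom, aeval_X, Matrix.cons_val_zero, Matrix.cons_val_one, mul_eq_zero,
    C_eq_zero, X_ne_zero, or_false] at h0 h1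
  exact P.1.rep_nonzero (funext fun i => by fin_cases i <;> assumption)

theorem mem_idealX_of_X_mul_mem {Xpts : Finset (Pt k)} {h : MvPolynomial (Fin 4) k}
    (h0 : X 0 * h ∈ idealX k Xpts) (h1 : X 1 * h ∈ idealX k Xpts) : h ∈ idealX k Xpts := by
  simp only [idealX, Ideal.mem_iInf] at h0 h1 ⊢
  intro P hP
  have hprime := ptIdeal_isPrime P
  rcases hprime.mem_or_mem (h0 P hP) with hs | hh
  · rcases hprime.mem_or_mem (h1 P hP) with ht | hh
    · exact absurd ⟨hs, ht⟩ (not_X_zero_mem_and_X_one_mem_ptIdeal P)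
    · exact hh
  · exact hh

theorem bideg_le_homogeneousSubmodule (i j : ℕ) :
    bideg k i j ≤ homogeneousSubmodule (Fin 4) k (i + j) := by
  intro p hp
  have := hp.map_weight (AddMonoidHom.coprod (AddMonoidHom.id ℕ) (AddMonoidHom.id ℕ))
  have hw : ⇑(AddMonoidHom.coprod (AddMonoidHom.id ℕ) (AddMonoidHom.id ℕ)) ∘ bw = 1 := by
    funext x
    fin_cases x <;> rfl
  rwa [hw] at this

instance (i j : ℕ) : FiniteDimensional k (bideg k i j) :=
  have : FiniteDimensional k (homogeneousSubmodule (Fin 4) k (i + j)) :=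
    Module.Finite.iff_fg.mpr (homogeneousSubmodule_fg _ _ _)
  Submodule.finiteDimensional_of_le (bideg_le_homogeneousSubmodule i j)

instance (Xpts : Finset (Pt k)) (i j : ℕ) : FiniteDimensional k (pieceI k Xpts i j) :=
  Submodule.finiteDimensional_of_le inf_le_right

theorem X_mul_mem_bideg_succ_iff {x : Fin 4} (hx : bw x = (1, 0)) {f : MvPolynomial (Fin 4) k}
    {i j : ℕ} : X x * f ∈ bideg k (i + 1) j ↔ f ∈ bideg k i j := by
  have : ((i + 1, j) : ℕ × ℕ) = bw x + (i, j) := by rw [hx, Prod.mk_add_mk, add_comm, zero_add]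
  simp only [bideg, mem_weightedHomogeneousSubmodule, this]
  exact ⟨IsWeightedHomogeneous.of_X_mul, (isWeightedHomogeneous_X k bw x).mul⟩

variable {Xpts : Finset (Pt k)}

theorem X_mul_mem_pieceI_succ {x : Fin 4} (hx : bw x = (1, 0)) {f : MvPolynomial (Fin 4) k}
    {i j : ℕ} (hf : f ∈ pieceI k Xpts i j) : X x * f ∈ pieceI k Xpts (i + 1) j :=
  ⟨Ideal.mul_mem_left _ _ hf.1, (X_mul_mem_bideg_succ_iff hx).mpr hf.2⟩

theorem mem_pieceI_of_X_mul_mem {f : MvPolynomial (Fin 4) k} {i j : ℕ}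
    (h0 : X 0 * f ∈ pieceI k Xpts (i + 1) j) (h1 : X 1 * f ∈ pieceI k Xpts (i + 1) j) :
    f ∈ pieceI k Xpts i j :=
  ⟨mem_idealX_of_X_mul_mem h0.1 h1.1, (X_mul_mem_bideg_succ_iff rfl).mp h0.2⟩

theorem bump_le_pieceI_succ (i j : ℕ) :
    bump k (pieceI k Xpts i j) ≤ pieceI k Xpts (i + 1) j := by
  rw [bump, Submodule.span_le]
  rintro _ (⟨f, hf, rfl⟩ | ⟨f, hf, rfl⟩)
  exacts [X_mul_mem_pieceI_succ rfl hf, X_mul_mem_pieceI_succ rfl hf]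

/-- `(f, g) ↦ s f + t g` maps `(I_X)_{(i+1,j)}²` onto `R_{(1,0)} · (I_X)_{(i+1,j)}`, and its
kernel is the image of the Koszul map `h ↦ (t h, -s h)` on `(I_X)_{(i,j)}`. -/
theorem finrank_bump_pieceI_add (i j : ℕ) :
    Module.finrank k (bump k (pieceI k Xpts (i + 1) j)) + Module.finrank k (pieceI k Xpts i j) =
      2 * Module.finrank k (pieceI k Xpts (i + 1) j) := by
  set N := pieceI k Xpts (i + 1) j
  set K := pieceI k Xpts i j
  let mulS := LinearMap.mulLeft k (X 0 : MvPolynomial (Fin 4) k)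
  let mulT := LinearMap.mulLeft k (X 1 : MvPolynomial (Fin 4) k)
  let L : N × N →ₗ[k] MvPolynomial (Fin 4) k := (mulS ∘ₗ N.subtype).coprod (mulT ∘ₗ N.subtype)
  let koszul : K →ₗ[k] N × N :=
    (LinearMap.codRestrict N (mulT ∘ₗ K.subtype) fun h => X_mul_mem_pieceI_succ rfl h.2).prod
      (LinearMap.codRestrict N (-(mulS ∘ₗ K.subtype)) fun h =>
        N.neg_mem (X_mul_mem_pieceI_succ rfl h.2))
  have hrange : LinearMap.range L = bump k N := by
    rw [LinearMap.range_coprod, LinearMap.range_comp, LinearMap.range_comp,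
      Submodule.range_subtype, bump, Submodule.span_union]
    change _ = Submodule.span k (mulS '' N) ⊔ Submodule.span k (mulT '' N)
    rw [← Submodule.map_coe, ← Submodule.map_coe, Submodule.span_eq, Submodule.span_eq]
  have hinj : Function.Injective koszul := fun h h' hh =>
    Subtype.ext <| mul_left_cancel₀ (X_ne_zero 1) <|
      congrArg (fun z : N × N => (z.1 : MvPolynomial (Fin 4) k)) hh
  have hker : LinearMap.range koszul = LinearMap.ker L := by
    ext ⟨⟨f, hf⟩, ⟨g, hg⟩⟩
    constructor
    · rintro ⟨h, hh⟩
      rw [LinearMap.mem_ker, ← hh]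
      change X 0 * (X 1 * h.1) + X 1 * -(X 0 * h.1) = 0
      ring
    · intro hfg
      obtain ⟨h, rfl, rfl⟩ := X_prime.exists_eq_mul_of_mul_add_mul_eq_zero
        (by simp [X_dvd_X]) (LinearMap.mem_ker.mp hfg)
      exact ⟨⟨h, mem_pieceI_of_X_mul_mem (by simpa using N.neg_mem hg) hf⟩, rfl⟩
  have hrank := LinearMap.finrank_range_add_finrank_ker L
  rw [hrange, ← hker, LinearMap.finrank_range_of_inj hinj, Module.finrank_prod] at hrank
  omega

theorem pieceI_succ_succ_eq_bump {i j : ℕ}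
    (h : Module.finrank k (pieceI k Xpts (i + 2) j) + Module.finrank k (pieceI k Xpts i j) ≤
      2 * Module.finrank k (pieceI k Xpts (i + 1) j)) :
    pieceI k Xpts (i + 2) j = bump k (pieceI k Xpts (i + 1) j) :=
  (Submodule.eq_of_le_of_finrank_le (bump_le_pieceI_succ (i + 1) j)
    (by have := finrank_bump_pieceI_add (Xpts := Xpts) i j; omega)).symm

theorem bump_le_restrictScalars_Kst {N : Submodule k (MvPolynomial (Fin 4) k)}
    {S : Submodule (Kst k) (MvPolynomial (Fin 4) k)} (h : N ≤ S.restrictScalars k) :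
    bump k N ≤ S.restrictScalars k := by
  rw [bump, Submodule.span_le]
  rintro _ (⟨f, hf, rfl⟩ | ⟨f, hf, rfl⟩)
  · exact S.smul_mem ⟨X 0, Algebra.subset_adjoin (by simp)⟩ (h hf)
  · exact S.smul_mem ⟨X 1, Algebra.subset_adjoin (by simp)⟩ (h hf)

theorem pieceI_le_span_Kst {κ j : ℕ} {g₁ g₂ : MvPolynomial (Fin 4) k}
    (hvanish : ∀ i < κ, pieceI k Xpts i j = ⊥)
    (hbump : ∀ a, κ ≤ a → pieceI k Xpts (a + 1) j = bump k (pieceI k Xpts a j))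
    (hspan : pieceI k Xpts κ j ≤ Submodule.span k {g₁, g₂}) (i : ℕ) :
    pieceI k Xpts i j ≤ (Submodule.span (Kst k) {g₁, g₂}).restrictScalars k := by
  rcases lt_or_ge i κ with hi | hi
  · simp [hvanish i hi]
  induction i, hi using Nat.le_induction with
  | base => exact hspan.trans (Submodule.span_le_restrictScalars k (Kst k) _)
  | succ a ha ih => rw [hbump a ha]; exact bump_le_restrictScalars_Kst ih

theorem finrank_pieceI_of_genericPts {κ : ℕ} (hκ : 1 ≤ κ) (hX : GenericPts k Xpts (2 * κ))
    (i : ℕ) : Module.finrank k (pieceI k Xpts i 1) = 2 * (i + 1) - 2 * κ := by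
  have := hX.2 i 1
  rcases le_total ((i + 1) * (1 + 1)) (2 * κ) with h | h
  · rw [min_eq_left h] at this; omega
  · rw [min_eq_right h] at this; omega

end PointsOfP1xP1

theorem stmt1_general {k : Type} [Field k] (κ : ℕ) (hκ : 1 ≤ κ)
    (Xpts : Finset (Pt k)) (hX : GenericPts k Xpts (2 * κ)) :
    (∀ i < κ, pieceI k Xpts i 1 = ⊥) ∧
    (Module.finrank k ↥(pieceI k Xpts κ 1) = 2) ∧
    (∀ a, κ ≤ a → pieceI k Xpts (a + 1) 1 = bump k (pieceI k Xpts a 1)) ∧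
    (∃ g₁ g₂ : MvPolynomial (Fin 4) k,
      g₁ ∈ pieceI k Xpts κ 1 ∧ g₂ ∈ pieceI k Xpts κ 1 ∧
      LinearIndependent k ![g₁, g₂] ∧
      ∀ (i : ℕ) (f : MvPolynomial (Fin 4) k), f ∈ pieceI k Xpts i 1 →
        ∃ p q : MvPolynomial (Fin 4) k, p ∈ Kst k ∧ q ∈ Kst k ∧ f = p * g₁ + q * g₂) := by
  have hdim := finrank_pieceI_of_genericPts hκ hX
  have hvanish : ∀ i < κ, pieceI k Xpts i 1 = ⊥ := fun i hi =>
    Submodule.finrank_eq_zero.mp (by rw [hdim]; omega)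
  have htwo : Module.finrank k (pieceI k Xpts κ 1) = 2 := by rw [hdim]; omega
  have hbump : ∀ a, κ ≤ a → pieceI k Xpts (a + 1) 1 = bump k (pieceI k Xpts a 1) := by
    intro a ha
    obtain ⟨i, rfl⟩ : ∃ i, a = i + 1 := ⟨a - 1, by omega⟩
    exact pieceI_succ_succ_eq_bump (by rw [hdim, hdim, hdim]; omega)
  refine ⟨hvanish, htwo, hbump, ?_⟩
  obtain ⟨g₁, g₂, hg₁, hg₂, hli, hspan⟩ :=
    Submodule.exists_linearIndependent_pair_of_finrank_eq_two htwo
  refine ⟨g₁, g₂, hg₁, hg₂, hli, fun i f hf => ?_⟩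
  obtain ⟨p, q, rfl⟩ :=
    Submodule.mem_span_pair.mp (pieceI_le_span_Kst hvanish hbump hspan i hf)
  exact ⟨p, q, p.2, q.2, rfl⟩

theorem stmt1 {k : Type} [Field k] [IsAlgClosed k] [CharZero k] (κ : ℕ) (hκ : 1 ≤ κ)
    (Xpts : Finset (Pt k)) (hX : GenericPts k Xpts (2 * κ)) :
    (∀ i < κ, pieceI k Xpts i 1 = ⊥) ∧
    (Module.finrank k ↥(pieceI k Xpts κ 1) = 2) ∧
    (∀ a, κ ≤ a → pieceI k Xpts (a + 1) 1 = bump k (pieceI k Xpts a 1)) ∧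
    (∃ g₁ g₂ : MvPolynomial (Fin 4) k,
      g₁ ∈ pieceI k Xpts κ 1 ∧ g₂ ∈ pieceI k Xpts κ 1 ∧
      LinearIndependent k ![g₁, g₂] ∧
      ∀ (i : ℕ) (f : MvPolynomial (Fin 4) k), f ∈ pieceI k Xpts i 1 →
        ∃ p q : MvPolynomial (Fin 4) k, p ∈ Kst k ∧ q ∈ Kst k ∧ f = p * g₁ + q * g₂) :=
  stmt1_general κ hκ Xpts hX
end

section
/- Let g_1, g_2 ∈ R be bihomogeneous elements of bidegree (k,1) forming a regular sequence in R. Let Q_0, Q_1, Q_2, Q_3, P_0, P_1, P_2, P_3 ∈ k[s,t] and set f_i = Q_i g_1 + P_i g_2 for i = 0,...,3. Then a tuple (s_0, s_1, s_2, s_3) ∈ k[s,t]^4 satisfies s_0 f_0 + s_1 f_1 + s_2 f_2 + s_3 f_3 = 0 if and only if s_0 Q_0 + s_1 Q_1 + s_2 Q_2 + s_3 Q_3 = 0 and s_0 P_0 + s_1 P_1 + s_2 P_2 + s_3 P_3 = 0. In other words, the syzygies of (f_0, f_1, f_2, f_3) with entries in k[s,t] are exactly the elements of the kernel over k[s,t]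 of the 2 x 4 matrix QP whose rows are (Q_0, Q_1, Q_2, Q_3) and (P_0, P_1, P_2, P_3). -/
open MvPolynomial

noncomputable section

variable (k : Type) [Field k] [IsAlgClosed k] [CharZero k]

/-! With `A = ∑ sᵢ Qᵢ` and `B = ∑ sᵢ Pᵢ` the relation reads `A g₁ + B g₂ = 0`. As `g₂` is regular
modulo `g₁`, `B ∈ (g₁)`. Setting `u = v = 0` kills `g₁`, which has degree 1 in `u, v`, but fixes
`B ∈ k[s,t]`; hence `B = 0`, and then `A = 0` because `g₁` is a nonzerodivisor. -/

section RegularSequence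

open scoped Pointwise

variable {R : Type*} [CommRing R]

theorem RingTheory.Sequence.IsWeaklyRegular.mem_span_singleton_of_mul_add_mul_eq_zero
    {a b x y : R} (hreg : RingTheory.Sequence.IsWeaklyRegular R [a, b])
    (hxy : x * a + y * b = 0) : y ∈ Ideal.span {a} := by
  obtain ⟨-, hb⟩ := (RingTheory.Sequence.isWeaklyRegular_cons_iff R a [b]).mp hreg
  have hb : IsSMulRegular (QuotSMulTop a R) b :=
    (RingTheory.Sequence.isWeaklyRegular_singleton_iff _ _).mp hb
  have hspan : (a • ⊤ : Submodule R R) = Ideal.span {a} := by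
    rw [← Submodule.ideal_span_singleton_smul, Ideal.smul_eq_mul, Ideal.mul_top]
  rw [← hspan]
  refine (isSMulRegular_quotient_iff_mem_of_smul_mem _ b).mp hb y ?_
  rw [hspan, Ideal.mem_span_singleton, smul_eq_mul]
  exact ⟨-x, by linear_combination hxy⟩

end RegularSequence

def evalUVZero (K : Type) [Field K] : MvPolynomial (Fin 4) K →ₐ[K] MvPolynomial (Fin 4) K :=
  aeval ![X 0, X 1, 0, 0]

section EvalUVZero

variable {K : Type} [Field K]

theorem evalUVZero_eq_self_of_mem_Kst {p : MvPolynomial (Fin 4) K} (hp : p ∈ Kst K) :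
    evalUVZero K p = p := by
  have hle : Kst K ≤ AlgHom.equalizer (evalUVZero K) (AlgHom.id K _) := by
    refine Algebra.adjoin_le ?_
    rintro _ (rfl | rfl) <;> simp [evalUVZero]
  exact hle hp

theorem evalUVZero_monomial_eq_zero {d : Fin 4 →₀ ℕ} (hd : d 2 + d 3 ≠ 0) (c : K) :
    evalUVZero K (monomial d c) = 0 := by
  rw [evalUVZero, aeval_monomial, Finsupp.prod_fintype _ _ (by simp), Fin.prod_univ_four]
  simp only [Matrix.cons_val, mul_eq_zero, pow_eq_zero_iff', ne_eq, true_and]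
  omega

theorem evalUVZero_eq_zero_of_mem_bideg {i j : ℕ} {g : MvPolynomial (Fin 4) K}
    (hg : g ∈ bideg K i (j + 1)) : evalUVZero K g = 0 := by
  rw [g.as_sum, map_sum]
  refine Finset.sum_eq_zero fun d hd => evalUVZero_monomial_eq_zero ?_ _
  have hdeg := congrArg Prod.snd (hg (mem_support_iff.mp hd))
  rw [Finsupp.weight_apply, Finsupp.sum_fintype _ _ (by simp)] at hdeg
  have : d 2 + d 3 = j + 1 := by simpa [Fin.sum_univ_four, bw] using hdeg
  omega

theorem eq_zero_of_mem_Kst_of_mem_span_bideg {i j : ℕ} {p g : MvPolynomial (Fin 4) K}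
    (hp : p ∈ Kst K) (hg : g ∈ bideg K i (j + 1)) (hpg : p ∈ Ideal.span {g}) : p = 0 := by
  obtain ⟨c, rfl⟩ := Ideal.mem_span_singleton'.mp hpg
  rw [← evalUVZero_eq_self_of_mem_Kst hp, map_mul, evalUVZero_eq_zero_of_mem_bideg hg, mul_zero]

end EvalUVZero

theorem stmt4_general {k : Type} [Field k] (κ : ℕ)
    (g₁ g₂ : MvPolynomial (Fin 4) k)
    (hg₁ : g₁ ∈ bideg k κ 1)
    (hreg : RingTheory.Sequence.IsRegular (MvPolynomial (Fin 4) k) [g₁, g₂])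
    (Q P : Fin 4 → MvPolynomial (Fin 4) k)
    (hP : ∀ i, P i ∈ Kst k)
    (f : Fin 4 → MvPolynomial (Fin 4) k)
    (hf : ∀ i, f i = Q i * g₁ + P i * g₂) :
    ∀ s : Fin 4 → MvPolynomial (Fin 4) k, (∀ i, s i ∈ Kst k) →
      ((∑ i, s i * f i = 0) ↔ ((∑ i, s i * Q i = 0) ∧ (∑ i, s i * P i = 0))) := by
  intro s hs
  have hsum : ∑ i, s i * f i = (∑ i, s i * Q i) * g₁ + (∑ i, s i * P i) * g₂ := by
    simp only [hf, Finset.sum_mul, ← Finset.sum_add_distrib]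
    exact Finset.sum_congr rfl fun i _ => by ring
  rw [hsum]
  refine ⟨fun h => ?_, fun ⟨hA, hB⟩ => by rw [hA, hB, zero_mul, zero_mul, add_zero]⟩
  have hB : ∑ i, s i * P i = 0 :=
    eq_zero_of_mem_Kst_of_mem_span_bideg
      (Subalgebra.sum_mem _ fun i _ => mul_mem (hs i) (hP i)) hg₁
      (hreg.toIsWeaklyRegular.mem_span_singleton_of_mul_add_mul_eq_zero h)
  rw [hB, zero_mul, add_zero] at h
  have hg₁_reg : IsSMulRegular (MvPolynomial (Fin 4) k) g₁ :=
    ((RingTheory.Sequence.isWeaklyRegular_cons_iff _ _ _).mp hreg.toIsWeaklyRegular).1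
  exact ⟨hg₁_reg (by simpa [mul_comm] using h), hB⟩

theorem stmt4 {k : Type} [Field k] [IsAlgClosed k] [CharZero k] (κ : ℕ)
    (g₁ g₂ : MvPolynomial (Fin 4) k)
    (hg₁ : g₁ ∈ bideg k κ 1) (hg₂ : g₂ ∈ bideg k κ 1)
    (hreg : RingTheory.Sequence.IsRegular (MvPolynomial (Fin 4) k) [g₁, g₂])
    (Q P : Fin 4 → MvPolynomial (Fin 4) k)
    (hQ : ∀ i, Q i ∈ Kst k) (hP : ∀ i, P i ∈ Kst k)
    (f : Fin 4 → MvPolynomial (Fin 4) k)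
    (hf : ∀ i, f i = Q i * g₁ + P i * g₂) :
    ∀ s : Fin 4 → MvPolynomial (Fin 4) k, (∀ i, s i ∈ Kst k) →
      ((∑ i, s i * f i = 0) ↔ ((∑ i, s i * Q i = 0) ∧ (∑ i, s i * P i = 0))) :=
  stmt4_general κ g₁ g₂ hg₁ hreg Q P hP f hf
end
end

section
/- Let X be a generic set of r = 2k points in P^1 x P^1, let a ≥ k+1, and let U = {f_0,...,f_3} be a generic 4-dimensional subspace of (I_X)_{(a,1)}. Let S_1, S_2 ∈ k[s,t]^4 be a free basis of the syzygy module { (s_0,...,s_3) ∈ k[s,t]^4 : Σ s_i f_i = 0 } whose components are homogeneous of degree a − k. Then the 2(a+k) elements { s^α t^β S_i : α + β = a + k − 1, i = 1,2 } form a k-basis of the space of syzygies of (f_0,...,f_3) whose components are homogeneous of degree 2a − 1; in particular this space has dimension 2a + r. -/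
open MvPolynomial

noncomputable section

variable (k : Type) [Field k] [IsAlgClosed k] [CharZero k]

/-- The `k`-linear map `(s₀,s₁,s₂,s₃) ↦ Σ sᵢ fᵢ` whose kernel is `Syz(f₀,…,f₃)`. -/
def syzMap (f : Fin 4 → MvPolynomial (Fin 4) k) :
    (Fin 4 → MvPolynomial (Fin 4) k) →ₗ[k] MvPolynomial (Fin 4) k where
  toFun s := ∑ i, s i * f i
  map_add' a b := by simp [add_mul, Finset.sum_add_distrib]
  map_smul' c a := by simp [Finset.smul_sum, smul_mul_assoc]

/-- The `k`-vector space of syzygies of `(f₀,…,f₃)` all of whose components are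
bihomogeneous of bidegree `(d,0)`; for `d = 2a-1` this is the graded piece `(Z₁)_ν`,
`ν = (2a-1,0)`, of the approximation complex. -/
def syzPiece (f : Fin 4 → MvPolynomial (Fin 4) k) (d : ℕ) :
    Submodule k (Fin 4 → MvPolynomial (Fin 4) k) :=
  (Submodule.pi Set.univ fun _ : Fin 4 => bideg k d 0) ⊓ LinearMap.ker (syzMap k f)

end

/-! Because `S₁, S₂` are bihomogeneous of bidegree `(a - κ, 0)` and freely generate the syzygies
over `k[s,t]`, taking bihomogeneous components shows that every syzygy of bidegree `(2a - 1, 0)` is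
uniquely `p S₁ + q S₂` with `p, q` binary forms of degree `D = a + κ - 1`. The `D + 1` monomials
`s^(D-β) t^β` form a basis of those forms, so the `s^(D-β) t^β Sⱼ` form a basis of the syzygies. -/

section MonomialsInST

variable {R : Type*} [CommSemiring R]

noncomputable def stMonomial (D β : ℕ) : MvPolynomial (Fin 4) R := X 0 ^ (D - β) * X 1 ^ β

lemma stMonomial_eq_monomial (D β : ℕ) :
    (stMonomial D β : MvPolynomial (Fin 4) R) =
      monomial (Finsupp.single 0 (D - β) + Finsupp.single 1 β) 1 := by
  rw [stMonomial, X_pow_eq_monomial, X_pow_eq_monomial, monomial_mul, one_mul]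

lemma linearIndependent_stMonomial [Nontrivial R] (D n : ℕ) :
    LinearIndependent R (fun β : Fin n => (stMonomial D β : MvPolynomial (Fin 4) R)) := by
  have hinj : Function.Injective
      (fun β : Fin n => Finsupp.single (0 : Fin 4) (D - β) + Finsupp.single 1 (β : ℕ)) := by
    intro β β' h
    simpa [Fin.ext_iff] using DFunLike.congr_fun h 1
  simpa [Function.comp_def, stMonomial_eq_monomial] using
    (basisMonomials (Fin 4) R).linearIndependent.comp _ hinj

end MonomialsInST

lemma weight_bw (d : Fin 4 →₀ ℕ) : Finsupp.weight bw d = (d 0 + d 1, d 2 + d 3) := by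
  simp [Finsupp.weight_apply, Finsupp.sum_fintype, Fin.sum_univ_four, bw, Prod.ext_iff]

section Bidegree

variable {k : Type} [Field k]

lemma stMonomial_mem_bideg {D β : ℕ} (hβ : β ≤ D) : stMonomial D β ∈ bideg k D 0 := by
  rw [stMonomial_eq_monomial]
  apply isWeightedHomogeneous_monomial
  simp [weight_bw, Nat.sub_add_cancel hβ]

lemma stMonomial_mem_Kst (D β : ℕ) : stMonomial D β ∈ Kst k :=
  mul_mem (pow_mem (Algebra.subset_adjoin (by simp)) _)
    (pow_mem (Algebra.subset_adjoin (by simp)) _)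

lemma mem_span_stMonomial_of_mem_bideg {D : ℕ} {p : MvPolynomial (Fin 4) k}
    (hp : p ∈ bideg k D 0) :
    p ∈ Submodule.span k (Set.range fun β : Fin (D + 1) => stMonomial D β) := by
  rw [as_sum p]
  refine Submodule.sum_mem _ fun e he => ?_
  have hw := hp (mem_support_iff.1 he)
  simp only [weight_bw, Prod.mk.injEq] at hw
  have he : e = Finsupp.single 0 (D - e 1) + Finsupp.single 1 (e 1) := by
    ext i
    fin_cases i <;> simp <;> omega
  have hmon : monomial e (coeff e p) = coeff e p • stMonomial D (e 1) := by
    rw [stMonomial_eq_monomial, smul_monomial, smul_eq_mul, mul_one, ← he]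
  rw [hmon]
  exact Submodule.smul_mem _ _ (Submodule.subset_span ⟨⟨e 1, by omega⟩, rfl⟩)

lemma mem_Kst_of_mem_bideg {D : ℕ} {p : MvPolynomial (Fin 4) k} (hp : p ∈ bideg k D 0) :
    p ∈ Kst k := by
  have hspan : Submodule.span k (Set.range fun β : Fin (D + 1) => stMonomial D β) ≤
      Subalgebra.toSubmodule (Kst k) :=
    Submodule.span_le.2 <| Set.range_subset_iff.2 fun β => stMonomial_mem_Kst D β
  exact hspan (mem_span_stMonomial_of_mem_bideg hp)

end Bidegree

lemma MvPolynomial.weightedHomogeneousComponent_add_mul {σ R M : Type*} [CommSemiring R]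
    [AddCancelCommMonoid M] {w : σ → M} {m e : M} (p : MvPolynomial σ R)
    {q : MvPolynomial σ R} (hq : q.IsWeightedHomogeneous w e) :
    weightedHomogeneousComponent w (m + e) (p * q) = weightedHomogeneousComponent w m p * q := by
  classical
  let _ := weightedGradedAlgebra R w
  simp_rw [← weightedDecomposition.decompose'_apply]
  exact DirectSum.coe_decompose_mul_add_of_right_mem _ hq

section SyzygyBasis

variable {k : Type} [Field k] {f S₁ S₂ : Fin 4 → MvPolynomial (Fin 4) k}

noncomputable def syzFamily (S₁ S₂ : Fin 4 → MvPolynomial (Fin 4) k) (D n : ℕ) :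
    Fin n × Fin 2 → Fin 4 → MvPolynomial (Fin 4) k :=
  fun x i => stMonomial D x.1 * ![S₁, S₂] x.2 i

lemma sum_smul_syzFamily {D n : ℕ} (g : Fin n × Fin 2 → k) :
    ∑ x, g x • syzFamily S₁ S₂ D n x =
      fun i =>
        (∑ β, g (β, 0) • stMonomial D β) * S₁ i + (∑ β, g (β, 1) • stMonomial D β) * S₂ i := by
  funext i
  simp only [syzFamily, Finset.sum_apply, Pi.smul_apply, Fintype.sum_prod_type, Fin.sum_univ_two,
    Finset.sum_add_distrib, Finset.sum_mul, smul_mul_assoc, Matrix.cons_val_zero,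
    Matrix.cons_val_one]

lemma linearIndependent_syzFamily
    (hfree : ∀ p q : MvPolynomial (Fin 4) k, p ∈ Kst k → q ∈ Kst k →
      (∀ i, p * S₁ i + q * S₂ i = 0) → p = 0 ∧ q = 0) (D n : ℕ) :
    LinearIndependent k (syzFamily S₁ S₂ D n) := by
  rw [Fintype.linearIndependent_iff]
  intro g hg
  rw [sum_smul_syzFamily] at hg
  have hKst (j : Fin 2) : ∑ β : Fin n, g (β, j) • stMonomial D β ∈ Kst k :=
    sum_mem fun β _ => Subalgebra.smul_mem _ (stMonomial_mem_Kst D β) _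
  obtain ⟨h₀, h₁⟩ := hfree _ _ (hKst 0) (hKst 1) (congrFun hg)
  have hmon := Fintype.linearIndependent_iff.1 (linearIndependent_stMonomial (R := k) D n)
  rintro ⟨β, j⟩
  fin_cases j
  exacts [hmon _ h₀ β, hmon _ h₁ β]

variable {D e d n : ℕ}

lemma range_syzFamily_subset_syzPiece
    (hS₁ : ∀ i, S₁ i ∈ bideg k e 0) (hS₂ : ∀ i, S₂ i ∈ bideg k e 0)
    (hS₁syz : ∑ i, S₁ i * f i = 0) (hS₂syz : ∑ i, S₂ i * f i = 0)
    (hd : D + e = d) (hn : n ≤ D + 1) :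
    Set.range (syzFamily S₁ S₂ D n) ⊆ syzPiece k f d := by
  rintro _ ⟨⟨β, j⟩, rfl⟩
  have hS : (∀ i, ![S₁, S₂] j i ∈ bideg k e 0) ∧ ∑ i, ![S₁, S₂] j i * f i = 0 := by
    fin_cases j
    exacts [⟨hS₁, hS₁syz⟩, ⟨hS₂, hS₂syz⟩]
  refine ⟨fun i _ => ?_, ?_⟩
  · have hmul := (stMonomial_mem_bideg (k := k) (by omega : (β : ℕ) ≤ D)).mul (hS.1 i)
    have hdeg : ((D, 0) + (e, 0) : ℕ × ℕ) = (d, 0) := by simp [hd]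
    rw [hdeg] at hmul
    exact hmul
  · change ∑ i, stMonomial D β * ![S₁, S₂] j i * f i = 0
    simp only [mul_assoc, ← Finset.mul_sum, hS.2, mul_zero]

lemma syzPiece_le_span_syzFamily
    (hS₁ : ∀ i, S₁ i ∈ bideg k e 0) (hS₂ : ∀ i, S₂ i ∈ bideg k e 0)
    (hgen : ∀ s : Fin 4 → MvPolynomial (Fin 4) k, (∀ i, s i ∈ Kst k) →
      (∑ i, s i * f i = 0) →
      ∃ p q : MvPolynomial (Fin 4) k, p ∈ Kst k ∧ q ∈ Kst k ∧
        ∀ i, s i = p * S₁ i + q * S₂ i)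
    (hd : D + e = d) (hn : n = D + 1) :
    syzPiece k f d ≤ Submodule.span k (Set.range (syzFamily S₁ S₂ D n)) := by
  subst hn
  rintro s ⟨hsdeg, hsyz⟩
  have hs (i : Fin 4) : s i ∈ bideg k d 0 := hsdeg i trivial
  obtain ⟨p, q, -, -, hpq⟩ := hgen s (fun i => mem_Kst_of_mem_bideg (hs i)) hsyz
  -- only the bidegree `(D, 0)` parts of the coefficients `p, q` contribute to `s`
  set p' := weightedHomogeneousComponent bw (D, 0) p
  set q' := weightedHomogeneousComponent bw (D, 0) q
  have hs' (i : Fin 4) : s i = p' * S₁ i + q' * S₂ i := by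
    have hdeg : ((d, 0) : ℕ × ℕ) = (D, 0) + (e, 0) := by simp [hd]
    rw [← (hs i).weightedHomogeneousComponent_same, hpq i, map_add, hdeg,
      weightedHomogeneousComponent_add_mul _ (hS₁ i),
      weightedHomogeneousComponent_add_mul _ (hS₂ i)]
  obtain ⟨c₁, hc₁⟩ := (Submodule.mem_span_range_iff_exists_fun k).1
    (mem_span_stMonomial_of_mem_bideg (weightedHomogeneousComponent_isWeightedHomogeneous _ p))
  obtain ⟨c₂, hc₂⟩ := (Submodule.mem_span_range_iff_exists_fun k).1
    (mem_span_stMonomial_of_mem_bideg (weightedHomogeneousComponent_isWeightedHomogeneous _ q))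
  refine (Submodule.mem_span_range_iff_exists_fun k).2 ⟨fun x => ![c₁, c₂] x.2 x.1, ?_⟩
  rw [sum_smul_syzFamily]
  funext i
  simp [hc₁, hc₂, hs', p', q']

end SyzygyBasis

theorem stmt11_general {k : Type} [Field k] (κ a : ℕ)
    (ha : κ + 1 ≤ a)
    (f : Fin 4 → MvPolynomial (Fin 4) k)
    (S₁ S₂ : Fin 4 → MvPolynomial (Fin 4) k)
    (hS₁ : ∀ i, S₁ i ∈ bideg k (a - κ) 0) (hS₂ : ∀ i, S₂ i ∈ bideg k (a - κ) 0)
    (hS₁syz : ∑ i, S₁ i * f i = 0) (hS₂syz : ∑ i, S₂ i * f i = 0)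
    (hgen : ∀ s : Fin 4 → MvPolynomial (Fin 4) k, (∀ i, s i ∈ Kst k) →
      (∑ i, s i * f i = 0) →
      ∃ p q : MvPolynomial (Fin 4) k, p ∈ Kst k ∧ q ∈ Kst k ∧
        ∀ i, s i = p * S₁ i + q * S₂ i)
    (hfree : ∀ p q : MvPolynomial (Fin 4) k, p ∈ Kst k → q ∈ Kst k →
      (∀ i, p * S₁ i + q * S₂ i = 0) → p = 0 ∧ q = 0) :
    LinearIndependent k
      (fun p : Fin (a + κ) × Fin 2 => fun i =>
        X 0 ^ (a + κ - 1 - (p.1 : ℕ)) * X 1 ^ (p.1 : ℕ) * ![S₁, S₂] p.2 i) ∧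
    Submodule.span k
      (Set.range fun p : Fin (a + κ) × Fin 2 => fun i =>
        X 0 ^ (a + κ - 1 - (p.1 : ℕ)) * X 1 ^ (p.1 : ℕ) * ![S₁, S₂] p.2 i) =
      syzPiece k f (2 * a - 1) ∧
    Module.finrank k ↥(syzPiece k f (2 * a - 1)) = 2 * a + 2 * κ := by
  have hli : LinearIndependent k (syzFamily S₁ S₂ (a + κ - 1) (a + κ)) :=
    linearIndependent_syzFamily hfree _ _
  have hspan : Submodule.span k (Set.range (syzFamily S₁ S₂ (a + κ - 1) (a + κ))) =
      syzPiece k f (2 * a - 1) :=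
    le_antisymm
      (Submodule.span_le.2 <| range_syzFamily_subset_syzPiece hS₁ hS₂ hS₁syz hS₂syz
        (by omega) (by omega))
      (syzPiece_le_span_syzFamily hS₁ hS₂ hgen (by omega) (by omega))
  refine ⟨hli, hspan, ?_⟩
  rw [← hspan, finrank_span_eq_card hli, Fintype.card_prod, Fintype.card_fin, Fintype.card_fin]
  omega

theorem stmt11 {k : Type} [Field k] [IsAlgClosed k] [CharZero k] (κ a n : ℕ)
    (ha : κ + 1 ≤ a)
    (Xpts : Finset (Pt k)) (hX : GenericPts k Xpts (2 * κ))
    (b : Fin n → MvPolynomial (Fin 4) k)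
    (hbli : LinearIndependent k b)
    (hbspan : Submodule.span k (Set.range b) = pieceI k Xpts a 1)
    (C : Matrix (Fin 4) (Fin n) k)
    (hminors : ∀ cols : Fin 4 → Fin n, Function.Injective cols →
      (C.submatrix id cols).det ≠ 0)
    (f : Fin 4 → MvPolynomial (Fin 4) k)
    (hf : ∀ i, f i = ∑ m, C i m • b m)
    (S₁ S₂ : Fin 4 → MvPolynomial (Fin 4) k)
    (hS₁ : ∀ i, S₁ i ∈ bideg k (a - κ) 0) (hS₂ : ∀ i, S₂ i ∈ bideg k (a - κ) 0)
    (hS₁syz : ∑ i, S₁ i * f i = 0) (hS₂syz : ∑ i, S₂ i * f i = 0)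
    (hgen : ∀ s : Fin 4 → MvPolynomial (Fin 4) k, (∀ i, s i ∈ Kst k) →
      (∑ i, s i * f i = 0) →
      ∃ p q : MvPolynomial (Fin 4) k, p ∈ Kst k ∧ q ∈ Kst k ∧
        ∀ i, s i = p * S₁ i + q * S₂ i)
    (hfree : ∀ p q : MvPolynomial (Fin 4) k, p ∈ Kst k → q ∈ Kst k →
      (∀ i, p * S₁ i + q * S₂ i = 0) → p = 0 ∧ q = 0) :
    LinearIndependent k
      (fun p : Fin (a + κ) × Fin 2 => fun i =>
        X 0 ^ (a + κ - 1 - (p.1 : ℕ)) * X 1 ^ (p.1 : ℕ) * ![S₁, S₂] p.2 i) ∧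
    Submodule.span k
      (Set.range fun p : Fin (a + κ) × Fin 2 => fun i =>
        X 0 ^ (a + κ - 1 - (p.1 : ℕ)) * X 1 ^ (p.1 : ℕ) * ![S₁, S₂] p.2 i) =
      syzPiece k f (2 * a - 1) ∧
    Module.finrank k ↥(syzPiece k f (2 * a - 1)) = 2 * a + 2 * κ :=
  stmt11_general κ a ha f S₁ S₂ hS₁ hS₂ hS₁syz hS₂syz hgen hfree
end
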